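/- arXiv:2605.11602 — 7 statements merged into one kernel-verified Lean document; each statement's English description precedes it below -/
import Mathlib

section
/- Let F : ℝ → ℝ be a continuous nondecreasing function, and let a₀ < b₀ be real numbers with F(a₀) = inf F and F(b₀) = sup F. Let s ∈ (a₀, b₀). If F is differentiable at s with derivative f(s) > 0, then there exists a constant L > 0 such that |F(s') − F(s)| ≥ L·|s' − s| for all s' ∈ [a₀, b₀]. -/
/-!
Near `s` the derivative gives `|F s' - F s| ≥ (f(s)/2) |s' - s|`. Away from `s`, monotonicity keeps
`|F s' - F s|` at least its value at distance `δ` from `s`, a positive constant, and on a bounded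
interval a positive constant dominates a multiple of `|s' - s|`.
-/

open Filter Set Topology

theorem HasDerivAt.eventually_mul_norm_sub_le {𝕜 E : Type*} [NontriviallyNormedField 𝕜]
    [NormedAddCommGroup E] [NormedSpace 𝕜 E] {f : 𝕜 → E} {f' : E} {x : 𝕜} {c : ℝ}
    (hf : HasDerivAt f f' x) (hc : c < ‖f'‖) :
    ∀ᶠ y in 𝓝 x, c * ‖y - x‖ ≤ ‖f y - f x‖ := by
  filter_upwards [hf.isLittleO.bound (sub_pos.2 hc)] with y hy
  have hlin : ‖y - x‖ * ‖f'‖ - ‖f y - f x‖ ≤ ‖f y - f x - (y - x) • f'‖ := by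
    rw [← norm_smul, norm_sub_rev (f y - f x)]
    exact norm_sub_norm_le ((y - x) • f') (f y - f x)
  nlinarith [norm_nonneg (y - x)]

theorem Monotone.abs_sub_le_abs_sub_of_mem_uIcc {α β : Type*} [LinearOrder α]
    [AddCommGroup β] [LinearOrder β] [IsOrderedAddMonoid β] {F : α → β} (hF : Monotone F)
    {s x y : α} (hx : x ∈ uIcc s y) : |F x - F s| ≤ |F y - F s| := by
  rcases le_total s y with hsy | hys
  · rw [uIcc_of_le hsy] at hx
    rw [abs_of_nonneg (sub_nonneg.2 (hF hx.1)), abs_of_nonneg (sub_nonneg.2 (hF hsy))]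
    exact sub_le_sub_right (hF hx.2) _
  · rw [uIcc_of_ge hys] at hx
    rw [abs_of_nonpos (sub_nonpos.2 (hF hx.2)), abs_of_nonpos (sub_nonpos.2 (hF hys))]
    exact neg_le_neg (sub_le_sub_right (hF hx.1) _)

theorem exists_mem_uIcc_abs_sub_eq {s y δ : ℝ} (hδ : 0 ≤ δ) (hy : δ ≤ |y - s|) :
    ∃ x ∈ uIcc s y, |x - s| = δ := by
  rcases le_total s y with hsy | hys
  · rw [abs_of_nonneg (sub_nonneg.2 hsy)] at hy
    refine ⟨s + δ, ?_, by simp [abs_of_nonneg hδ]⟩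
    rw [uIcc_of_le hsy]
    constructor <;> linarith
  · rw [abs_of_nonpos (sub_nonpos.2 hys)] at hy
    refine ⟨s - δ, ?_, by simp [abs_of_nonneg hδ]⟩
    rw [uIcc_of_ge hys]
    constructor <;> linarith

theorem Monotone.exists_pos_mul_abs_sub_le {F : ℝ → ℝ} (hF : Monotone F) {s c R : ℝ}
    (hc : 0 < c) (hloc : ∀ᶠ y in 𝓝 s, c * |y - s| ≤ |F y - F s|) :
    ∃ L > 0, ∀ y, |y - s| ≤ R → L * |y - s| ≤ |F y - F s| := by
  obtain ⟨ε, hε, hball⟩ := Metric.eventually_nhds_iff.1 hloc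
  have hnear : ∀ y, |y - s| < ε → c * |y - s| ≤ |F y - F s| := fun y hy =>
    hball (by rwa [Real.dist_eq])
  obtain ⟨δ, hδ, hδε⟩ := exists_between hε
  have hRδ : 0 < max R δ := lt_max_of_lt_right hδ
  refine ⟨c * (δ / max R δ), by positivity, fun y hy => ?_⟩
  rcases le_or_gt |y - s| δ with hclose | hfar
  · calc c * (δ / max R δ) * |y - s| ≤ c * |y - s| := by
          gcongr
          exact mul_le_of_le_one_right hc.le (div_le_one_of_le₀ (le_max_right _ _) hRδ.le)
      _ ≤ |F y - F s| := hnear y (by linarith)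
  · obtain ⟨x, hx, hxs⟩ := exists_mem_uIcc_abs_sub_eq hδ.le hfar.le
    calc c * (δ / max R δ) * |y - s| = c * δ * (|y - s| / max R δ) := by ring
      _ ≤ c * δ := by
          apply mul_le_of_le_one_right (by positivity)
          exact div_le_one_of_le₀ (hy.trans (le_max_left _ _)) hRδ.le
      _ = c * |x - s| := by rw [hxs]
      _ ≤ |F x - F s| := hnear x (by linarith)
      _ ≤ |F y - F s| := hF.abs_sub_le_abs_sub_of_mem_uIcc hx

theorem stmt_0_general (F : ℝ → ℝ) (hF_mono : Monotone F)
    (a₀ b₀ : ℝ)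
    (s : ℝ) (hs : s ∈ Set.Ioo a₀ b₀)
    (fs : ℝ) (hderiv : HasDerivAt F fs s) (hfs : 0 < fs) :
    ∃ L > 0, ∀ s' ∈ Set.Icc a₀ b₀, L * |s' - s| ≤ |F s' - F s| := by
  have hloc : ∀ᶠ y in 𝓝 s, fs / 2 * |y - s| ≤ |F y - F s| := by
    have hlt : fs / 2 < ‖fs‖ := by rw [Real.norm_of_nonneg hfs.le]; linarith
    simpa only [Real.norm_eq_abs] using hderiv.eventually_mul_norm_sub_le hlt
  obtain ⟨L, hL, hbound⟩ := hF_mono.exists_pos_mul_abs_sub_le (R := b₀ - a₀) (half_pos hfs) hloc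
  refine ⟨L, hL, fun s' hs' => hbound s' ?_⟩
  rw [abs_sub_le_iff]
  constructor <;> linarith [hs.1, hs.2, hs'.1, hs'.2]

/-- Sub-Lipschitz property at a point of positive derivative for a continuous
nondecreasing function attaining its extremes at `a₀` and `b₀`. -/
theorem stmt_0 (F : ℝ → ℝ) (hF_cont : Continuous F) (hF_mono : Monotone F)
    (a₀ b₀ : ℝ) (hab : a₀ < b₀)
    (hinf : ∀ t, F a₀ ≤ F t) (hsup : ∀ t, F t ≤ F b₀)
    (s : ℝ) (hs : s ∈ Set.Ioo a₀ b₀)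
    (fs : ℝ) (hderiv : HasDerivAt F fs s) (hfs : 0 < fs) :
    ∃ L > 0, ∀ s' ∈ Set.Icc a₀ b₀, L * |s' - s| ≤ |F s' - F s| :=
  stmt_0_general F hF_mono a₀ b₀ s hs fs hderiv hfs
end

section
/- Let (X,Y) be a random pair with conditional distribution of Y given X = x supported on [−M₁(x), M₂(x)] with conditional density f_x bounded below by L(x) > 0. Let Q_α(x) be the conditional (1−α)-quantile of Y given X = x, and let Q̂ be any measurable function with Q̂(x) ∈ [−M₁(x), M₂(x)] for all x. Define the pinball loss ℓ_{1−α}(s₁,s₂) = (1−α − 𝟙(s₂ ≥ s₁))(s₁ − s₂). Then for every x, E[ℓ_{1−α}(Y, Q̂(x)) − ℓ_{1−α}(Y, Q_α(x)) | X = x] ≥ (L(x)/2)·(Q̂(x) − Q_α(x))². -/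
/-!
Pointwise, `ℓ(y, a) - ℓ(y, b) = (a - b) (𝟙(y ≤ b) - (1 - α)) + 𝟙(y ∈ Ι b a) |a - y|`, where
`Ι b a` is the half-open interval between `b` and `a`. When `b` is a `(1 - α)`-quantile the first
term has mean zero, so the excess risk of `a` is `E[|a - Y|; Y ∈ Ι b a]`. The density is at least
`L` on `Ι b a`, hence this is at least `L ∫_{Ι b a} |a - y| dy = L (a - b)² / 2`.
-/

open MeasureTheory

/-- The pinball (quantile) loss at level `1 - α`:
`ℓ_{1-α}(s₁, s₂) = (1 - α - 𝟙(s₂ ≥ s₁)) (s₁ - s₂)`. -/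
noncomputable def pinball (α s₁ s₂ : ℝ) : ℝ :=
  ((1 - α) - (if s₂ ≥ s₁ then (1:ℝ) else 0)) * (s₁ - s₂)

open Set
open scoped Interval

lemma ae_mem_withDensity_of_eq_zero {Ω : Type*} [MeasurableSpace Ω] {ν : Measure Ω} {f : Ω → ℝ}
    {s : Set Ω} (hs : MeasurableSet s) (h : ∀ y ∉ s, f y = 0) : ∀ᵐ y ∂(ν.withDensity fun y => ENNReal.ofReal (f y)), y ∈ s := by
  rw [ae_iff, ← compl_def, withDensity_apply _ hs.compl]
  exact setLIntegral_eq_zero hs.compl fun y hy => by simp [h y hy]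

lemma integrable_id_of_ae_mem_Icc {μ : Measure ℝ} [IsFiniteMeasure μ] {m M : ℝ}
    (h : ∀ᵐ y ∂μ, y ∈ Icc m M) : Integrable id μ :=
  .of_bound measurable_id.aestronglyMeasurable (max |m| |M|)
    (h.mono fun _ hy => abs_le_max_abs_abs hy.1 hy.2)

lemma pinball_eq_add_posPart (α y c : ℝ) : pinball α y c = (1 - α) * (y - c) + max (c - y) 0 := by
  unfold pinball
  split_ifs with h
  · rw [max_eq_left (by linarith)]; ring
  · rw [max_eq_right (by linarith)]; ring

lemma pinball_sub_pinball (α y a b : ℝ) :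
    pinball α y a - pinball α y b =
      (a - b) * ((Iic b).indicator 1 y - (1 - α)) + (Ι b a).indicator (fun y => |a - y|) y := by
  rcases le_total b a with h | h
  on_goal 1 => rw [uIoc_of_le h]
  on_goal 2 => rw [uIoc_of_ge h]
  all_goals
    simp only [pinball_eq_add_posPart, indicator_apply, mem_Iic, mem_Ioc, Pi.one_apply, max_def,
      abs_eq_max_neg]
    split_ifs <;> grind

lemma integrable_pinball {μ : Measure ℝ} [IsFiniteMeasure μ] (hμ : Integrable id μ) (α c : ℝ) :
    Integrable (fun y => pinball α y c) μ := by
  simp only [pinball_eq_add_posPart]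
  exact ((hμ.sub (integrable_const c)).const_mul _).add ((integrable_const c).sub hμ).pos_part

lemma integral_pinball_sub_pinball {μ : Measure ℝ} [IsProbabilityMeasure μ] (hμ : Integrable id μ)
    (α a b : ℝ) :
    ∫ y, pinball α y a ∂μ - ∫ y, pinball α y b ∂μ =
      (a - b) * (μ.real (Iic b) - (1 - α)) + ∫ y in Ι b a, |a - y| ∂μ := by
  rw [← integral_sub (integrable_pinball hμ α a) (integrable_pinball hμ α b)]
  simp_rw [pinball_sub_pinball]
  have hind : Integrable ((Iic b).indicator (1 : ℝ → ℝ)) μ :=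
    (integrable_const 1).indicator measurableSet_Iic
  have habs : IntegrableOn (fun y => |a - y|) (Ι b a) μ :=
    (by fun_prop : Continuous fun y => |a - y|).integrableOn_uIoc
  have hlin : Integrable (fun y => (a - b) * ((Iic b).indicator 1 y - (1 - α))) μ :=
    (hind.sub (integrable_const _)).const_mul _
  rw [integral_add hlin ((integrable_indicator_iff measurableSet_uIoc).2 habs), integral_const_mul,
    integral_sub hind (integrable_const _), integral_indicator measurableSet_uIoc,
    integral_indicator_one measurableSet_Iic]
  simp

lemma mul_setIntegral_le_setIntegral_withDensity {Ω : Type*} [MeasurableSpace Ω] {ν : Measure Ω}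
    {f g : Ω → ℝ} {s : Set Ω} (hs : MeasurableSet s) {L : ℝ} (hL : 0 ≤ L)
    (hlow : ∀ y ∈ s, L ≤ f y) (hg : ∀ y ∈ s, 0 ≤ g y)
    (hgi : IntegrableOn g s (ν.withDensity fun y => ENNReal.ofReal (f y))) :
    L * ∫ y in s, g y ∂ν ≤ ∫ y in s, g y ∂(ν.withDensity fun y => ENNReal.ofReal (f y)) := by
  have hle : ENNReal.ofReal L • ν.restrict s ≤
      (ν.withDensity fun y => ENNReal.ofReal (f y)).restrict s := by
    rw [restrict_withDensity hs, ← withDensity_const]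
    exact withDensity_mono ((ae_restrict_iff' hs).2 (.of_forall fun y hy =>
      ENNReal.ofReal_le_ofReal (hlow y hy)))
  calc L * ∫ y in s, g y ∂ν = ∫ y, g y ∂(ENNReal.ofReal L • ν.restrict s) := by
        rw [integral_smul_measure, ENNReal.toReal_ofReal hL, smul_eq_mul]
    _ ≤ _ := integral_mono_measure hle ((ae_restrict_iff' hs).2 (.of_forall hg)) hgi

lemma setIntegral_uIoc_abs_sub (a b : ℝ) : ∫ y in Ι b a, |a - y| = (a - b) ^ 2 / 2 := by
  rcases le_total b a with h | h
  · rw [uIoc_of_le h, setIntegral_congr_fun measurableSet_Ioc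
      fun y hy => abs_of_nonneg (sub_nonneg.2 hy.2), ← intervalIntegral.integral_of_le h,
      intervalIntegral.integral_comp_sub_left (fun x => x), integral_id]
    ring
  · rw [uIoc_of_ge h, setIntegral_congr_fun measurableSet_Ioc
      fun y hy => abs_of_nonpos (sub_nonpos.2 hy.1.le), ← intervalIntegral.integral_of_le h]
    simp only [neg_sub]
    rw [intervalIntegral.integral_comp_sub_right (fun x => x), integral_id]
    ring

theorem stmt_2_general {𝒳 : Type*} (α : ℝ) (hα : α ∈ Set.Ioo (0:ℝ) 1)
    (M₁ M₂ L : 𝒳 → ℝ) (f : 𝒳 → ℝ → ℝ) (μ : 𝒳 → Measure ℝ)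
    (hμ : ∀ x, μ x = volume.withDensity (fun y => ENNReal.ofReal (f x y)))
    (hprob : ∀ x, IsProbabilityMeasure (μ x))
    (hsupp : ∀ x, ∀ y, y ∉ Set.Icc (-(M₁ x)) (M₂ x) → f x y = 0)
    (hL : ∀ x, 0 < L x)
    (hlow : ∀ x, ∀ y ∈ Set.Icc (-(M₁ x)) (M₂ x), L x ≤ f x y)
    (Qα Qhat : 𝒳 → ℝ)
    (hQα_mem : ∀ x, Qα x ∈ Set.Icc (-(M₁ x)) (M₂ x))
    (hQα_q : ∀ x, (μ x) (Set.Iic (Qα x)) = ENNReal.ofReal (1 - α))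
    (hQhat_mem : ∀ x, Qhat x ∈ Set.Icc (-(M₁ x)) (M₂ x)) :
    ∀ x, (L x / 2) * (Qhat x - Qα x) ^ 2 ≤
      (∫ y, pinball α y (Qhat x) ∂(μ x)) - ∫ y, pinball α y (Qα x) ∂(μ x) := by
  intro x
  have := hprob x
  have hmoment : Integrable id (μ x) := integrable_id_of_ae_mem_Icc <|
    hμ x ▸ ae_mem_withDensity_of_eq_zero measurableSet_Icc (hsupp x)
  have hquantile : (μ x).real (Iic (Qα x)) = 1 - α := by
    rw [measureReal_def, hQα_q x, ENNReal.toReal_ofReal (by linarith [hα.2])]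
  have hbetween : Ι (Qα x) (Qhat x) ⊆ Icc (-(M₁ x)) (M₂ x) :=
    uIoc_subset_uIcc.trans (uIcc_subset_Icc (hQα_mem x) (hQhat_mem x))
  have hint : IntegrableOn (fun y => |Qhat x - y|) (Ι (Qα x) (Qhat x)) (μ x) :=
    (by fun_prop : Continuous fun y => |Qhat x - y|).integrableOn_uIoc
  rw [integral_pinball_sub_pinball hmoment, hquantile, sub_self, mul_zero, zero_add]
  calc L x / 2 * (Qhat x - Qα x) ^ 2 = L x * ∫ y in Ι (Qα x) (Qhat x), |Qhat x - y| := by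
        rw [setIntegral_uIoc_abs_sub]; ring
    _ ≤ _ := by
      rw [hμ x] at hint ⊢
      exact mul_setIntegral_le_setIntegral_withDensity measurableSet_uIoc (hL x).le
        (fun y hy => hlow x y (hbetween hy)) (fun y _ => abs_nonneg _) hint

/-- Conditional pinball excess-risk lower bound: for each covariate value `x`, the
conditional excess pinball risk of `Qhat x` over the true conditional `(1-α)`-quantile
`Qα x` is at least `(L x / 2) (Qhat x - Qα x)²`. -/
theorem stmt_2 {𝒳 : Type*} (α : ℝ) (hα : α ∈ Set.Ioo (0:ℝ) 1)
    (M₁ M₂ L : 𝒳 → ℝ) (f : 𝒳 → ℝ → ℝ) (μ : 𝒳 → Measure ℝ)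
    (hf_meas : ∀ x, Measurable (f x)) (hf_nonneg : ∀ x y, 0 ≤ f x y)
    (hμ : ∀ x, μ x = volume.withDensity (fun y => ENNReal.ofReal (f x y)))
    (hprob : ∀ x, IsProbabilityMeasure (μ x))
    (hsupp : ∀ x, ∀ y, y ∉ Set.Icc (-(M₁ x)) (M₂ x) → f x y = 0)
    (hL : ∀ x, 0 < L x)
    (hlow : ∀ x, ∀ y ∈ Set.Icc (-(M₁ x)) (M₂ x), L x ≤ f x y)
    (Qα Qhat : 𝒳 → ℝ)
    (hQα_mem : ∀ x, Qα x ∈ Set.Icc (-(M₁ x)) (M₂ x))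
    (hQα_q : ∀ x, (μ x) (Set.Iic (Qα x)) = ENNReal.ofReal (1 - α))
    (hQhat_mem : ∀ x, Qhat x ∈ Set.Icc (-(M₁ x)) (M₂ x)) :
    ∀ x, (L x / 2) * (Qhat x - Qα x) ^ 2 ≤
      (∫ y, pinball α y (Qhat x) ∂(μ x)) - ∫ y, pinball α y (Qα x) ∂(μ x) :=
  stmt_2_general α hα M₁ M₂ L f μ hμ hprob hsupp hL hlow Qα Qhat hQα_mem hQα_q hQhat_mem
end

section
/- Let w₁,...,w_{n+1} be nonnegative reals with positive sum, and let s₁,...,s_{n+1} be reals. Define the weighted empirical distribution P = (Σᵢ wᵢ)^{-1} Σᵢ wᵢ δ_{sᵢ} and let q = Q(1−α; P) be its (1−α)-quantile. Then 1−α ≤ Σⱼ (wⱼ / Σᵢ wᵢ) 𝟙(sⱼ ≤ q) ≤ 1−α + ŵ_max, where ŵ_max = sup_c (Σᵢ wᵢ 𝟙(sᵢ = c)) / (Σᵢ wᵢ) is the largest atom of P. -/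
/-! The weighted empirical CDF `F` is a nondecreasing step function that jumps only at the
scores. Since there are finitely many scores, some `ε > 0` separates `q` from every score other
than `q` itself. Then `F` is constant on `[q, q + ε)`, and points of `{u | 1 - α ≤ F u}` lie
arbitrarily close above its infimum `q`, so `1 - α ≤ F q`. On the left, `q - ε/2` lies below the
infimum, so `F (q - ε/2) < 1 - α`, and `F q` exceeds `F (q - ε/2)` only by the atom at `q`. -/

open Finset

section WeightedEmpirical

variable {ι : Type*} [Fintype ι] (w s : ι → ℝ)

noncomputable def weightedCDF (u : ℝ) : ℝ :=
  (∑ i, if s i ≤ u then w i else 0) / ∑ i, w i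

noncomputable def weightedAtom (c : ℝ) : ℝ :=
  (∑ i, if s i = c then w i else 0) / ∑ i, w i

variable {w s}

theorem weightedCDF_mono (hw : ∀ i, 0 ≤ w i) : Monotone (weightedCDF w s) := by
  intro u v huv
  refine div_le_div_of_nonneg_right (sum_le_sum fun i _ => ?_) (sum_nonneg fun i _ => hw i)
  split_ifs with hu hv
  · exact le_rfl
  · exact absurd (hu.trans huv) hv
  · exact hw i
  · exact le_rfl

theorem weightedCDF_eq_one {u : ℝ} (hW : ∑ i, w i ≠ 0) (hu : ∀ i, s i ≤ u) :
    weightedCDF w s u = 1 := by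
  simp only [weightedCDF, hu, if_true]
  exact div_self hW

theorem weightedCDF_eq_zero {u : ℝ} (hu : ∀ i, u < s i) : weightedCDF w s u = 0 := by
  simp [weightedCDF, fun i => not_le.mpr (hu i)]

theorem weightedAtom_le_one (hw : ∀ i, 0 ≤ w i) (hW : 0 < ∑ i, w i) (c : ℝ) :
    weightedAtom w s c ≤ 1 := by
  rw [weightedAtom, div_le_one hW]
  gcongr with i
  split_ifs
  · exact le_rfl
  · exact hw i

theorem weightedCDF_add_of_gap {x ε δ : ℝ} (hgap : ∀ i, s i ≠ x → ε ≤ |s i - x|)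
    (hδ : 0 < δ) (hδε : δ < ε) : weightedCDF w s (x + δ) = weightedCDF w s x := by
  unfold weightedCDF
  congr 1
  refine sum_congr rfl fun i _ => if_congr ?_ rfl rfl
  by_cases hi : s i = x
  · simp only [hi, le_refl, iff_true]
    linarith
  · have := hgap i hi
    constructor <;> intro h <;> cases abs_cases (s i - x) <;> linarith

theorem weightedCDF_eq_sub_add_weightedAtom {x ε δ : ℝ} (hgap : ∀ i, s i ≠ x → ε ≤ |s i - x|)
    (hδ : 0 < δ) (hδε : δ < ε) :
    weightedCDF w s x = weightedCDF w s (x - δ) + weightedAtom w s x := by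
  rw [weightedCDF, weightedCDF, weightedAtom, ← add_div, ← sum_add_distrib]
  congr 1
  refine sum_congr rfl fun i _ => ?_
  by_cases hi : s i = x
  · simp only [hi, le_refl, if_true]
    rw [if_neg (by linarith), zero_add]
  · have := hgap i hi
    rw [if_neg hi, add_zero]
    cases abs_cases (s i - x) with
    | inl h => rw [if_neg (by linarith), if_neg (by linarith)]
    | inr h => rw [if_pos (by linarith), if_pos (by linarith)]

end WeightedEmpirical

theorem exists_pos_forall_le_abs_sub {ι : Type*} [Finite ι] (s : ι → ℝ) (x : ℝ) :
    ∃ ε > 0, ∀ i, s i ≠ x → ε ≤ |s i - x| := by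
  have hclosed : IsClosed (s '' {i | s i ≠ x}) := (Set.toFinite _).isClosed
  have hx : x ∉ s '' {i | s i ≠ x} := fun ⟨i, hi, hix⟩ => hi hix
  obtain ⟨ε, hε, hball⟩ := Metric.mem_nhds_iff.mp (hclosed.isOpen_compl.mem_nhds hx)
  refine ⟨ε, hε, fun i hi => not_lt.mp fun hlt => hball ?_ ⟨i, hi, rfl⟩⟩
  rwa [Metric.mem_ball, Real.dist_eq]

noncomputable def weightedQuantile {ι : Type*} [Fintype ι] (w s : ι → ℝ) (c : ℝ) : ℝ :=
  sInf {u | c ≤ weightedCDF w s u}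

section Quantile

variable {ι : Type*} [Fintype ι] {w s : ι → ℝ} {c : ℝ}

theorem nonempty_setOf_le_weightedCDF (hW : ∑ i, w i ≠ 0) (hc : c ≤ 1) :
    {u | c ≤ weightedCDF w s u}.Nonempty := by
  obtain ⟨u, hu⟩ := (Set.finite_range s).bddAbove
  exact ⟨u, show c ≤ _ from (weightedCDF_eq_one hW fun i => hu (Set.mem_range_self i)).symm ▸ hc⟩

theorem bddBelow_setOf_le_weightedCDF (hc : 0 < c) : BddBelow {u | c ≤ weightedCDF w s u} := by
  obtain ⟨l, hl⟩ := (Set.finite_range s).bddBelow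
  refine ⟨l - 1, fun u hu => le_of_not_gt fun hul => ?_⟩
  have hzero : weightedCDF w s u = 0 :=
    weightedCDF_eq_zero fun i => by linarith [hl (Set.mem_range_self i)]
  exact hc.not_ge (hzero ▸ hu)

theorem le_weightedCDF_weightedQuantile (hw : ∀ i, 0 ≤ w i) (hW : ∑ i, w i ≠ 0) (hc : c ≤ 1) :
    c ≤ weightedCDF w s (weightedQuantile w s c) := by
  set q := weightedQuantile w s c
  obtain ⟨ε, hε, hgap⟩ := exists_pos_forall_le_abs_sub s q
  obtain ⟨u, hu, huq⟩ := exists_lt_of_csInf_lt (nonempty_setOf_le_weightedCDF hW hc)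
    (show q < q + ε / 2 by linarith)
  calc c ≤ weightedCDF w s u := hu
    _ ≤ weightedCDF w s (q + ε / 2) := weightedCDF_mono hw huq.le
    _ = weightedCDF w s q := weightedCDF_add_of_gap hgap (by positivity) (by linarith)

theorem weightedCDF_weightedQuantile_le (hc : 0 < c) :
    weightedCDF w s (weightedQuantile w s c) ≤ c + weightedAtom w s (weightedQuantile w s c) := by
  set q := weightedQuantile w s c
  obtain ⟨ε, hε, hgap⟩ := exists_pos_forall_le_abs_sub s q
  have hbelow : weightedCDF w s (q - ε / 2) < c :=
    not_le.mp fun h => notMem_of_lt_csInf (show q - ε / 2 < q by linarith)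
      (bddBelow_setOf_le_weightedCDF hc) h
  rw [weightedCDF_eq_sub_add_weightedAtom (δ := ε / 2) hgap (by positivity) (by linarith)]
  linarith

theorem weightedAtom_le_sSup (hw : ∀ i, 0 ≤ w i) (hW : 0 < ∑ i, w i) (c : ℝ) :
    weightedAtom w s c ≤ sSup {v | ∃ c, v = weightedAtom w s c} :=
  le_csSup ⟨1, fun _ ⟨c', hc'⟩ => hc' ▸ weightedAtom_le_one hw hW c'⟩ ⟨c, rfl⟩

end Quantile

/-- Deterministic weighted conformal calibration inequality: the weighted empirical CDF
evaluated at its own `(1-α)`-quantile lies in `[1-α, 1-α + ŵ_max]`, where `ŵ_max` is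
the largest atom of the weighted empirical distribution. -/
theorem stmt_6 (n : ℕ) (w s : Fin (n + 1) → ℝ) (α : ℝ)
    (hw : ∀ i, 0 ≤ w i) (hW : 0 < ∑ i, w i) (hα : α ∈ Set.Ioo (0:ℝ) 1)
    (Fhat : ℝ → ℝ)
    (hFhat : ∀ u, Fhat u = (∑ i, if s i ≤ u then w i else 0) / ∑ i, w i)
    (q : ℝ) (hq : q = sInf {u | 1 - α ≤ Fhat u})
    (wmax : ℝ)
    (hwmax : wmax = sSup {v | ∃ c : ℝ, v = (∑ i, if s i = c then w i else 0) / ∑ i, w i}) :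
    1 - α ≤ Fhat q ∧ Fhat q ≤ 1 - α + wmax := by
  obtain ⟨hα0, hα1⟩ := hα
  obtain rfl : Fhat = weightedCDF w s := funext hFhat
  subst hq hwmax
  change 1 - α ≤ weightedCDF w s (weightedQuantile w s (1 - α)) ∧ _
  refine ⟨le_weightedCDF_weightedQuantile hw hW.ne' (by linarith), ?_⟩
  calc weightedCDF w s (weightedQuantile w s (1 - α))
      ≤ 1 - α + weightedAtom w s (weightedQuantile w s (1 - α)) :=
        weightedCDF_weightedQuantile_le (by linarith)
    _ ≤ _ := by gcongr; exact weightedAtom_le_sSup hw hW _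
end

section
/- Let X be supported on [0,1]^d with density bounded in [L₁, L̄₁] for 0 < L₁ ≤ L̄₁ < ∞. Let K(x₁,x₂;h) = K₀(‖x₁−x₂‖₂/h) where K₀ : [0,∞) → [0,∞) is bounded, nonincreasing, u·K₀(u) is nonincreasing for u > 1, and ∫₀^∞ u^d K₀(u) du < ∞. Then for every ℓ ≥ 1 there exist constants 0 < L₂ ≤ L̄₂ < ∞ (depending on d, ℓ, K₀, L₁, L̄₁) such that L₂ ≤ h^{-d} E[(K(X, x₀; h))^ℓ] ≤ L̄₂ for all x₀ ∈ [0,1]^d and all h ∈ (0,1]. -/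
/-!
Substituting `x = x₀ + h z` turns the moment into `h ^ d ∫ f_X(x₀ + h z) K₀(‖z‖)^ℓ dz`.
For the upper bound, `f_X ≤ L̄₁`, and `K₀^ℓ ≤ C^(ℓ-1) K₀` together with `∫ u^d K₀(u) du < ∞`
makes `z ↦ K₀(‖z‖)^ℓ` integrable (polar coordinates). For the lower bound, the integrand is at
least `L₁ K₀(1)^ℓ` on `[0,1]^d ∩ B(x₀, h)`, and this set contains a subcube of side
`h / (√d + 1)`.
-/

open MeasureTheory Set Metric Module

lemma rpow_le_rpow_sub_one_mul_self {a C ℓ : ℝ} (ha : 0 ≤ a) (haC : a ≤ C) (hℓ : 1 ≤ ℓ) :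
    a ^ ℓ ≤ C ^ (ℓ - 1) * a :=
  calc a ^ ℓ = a ^ (ℓ - 1) * a := by
        rw [← Real.rpow_add_one' ha (by linarith), sub_add_cancel]
    _ ≤ C ^ (ℓ - 1) * a := by gcongr

lemma integrableOn_pow_pred_mul_rpow {d : ℕ} {K : ℝ → ℝ} {C ℓ : ℝ}
    (hK_nonneg : ∀ u, 0 ≤ K u) (hK_bdd : ∀ u, K u ≤ C) (hK_anti : AntitoneOn K (Ici 0))
    (hℓ : 1 ≤ ℓ) (hK_int : IntegrableOn (fun u => u ^ d * K u) (Ioi 0)) :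
    IntegrableOn (fun u => u ^ (d - 1) * K u ^ ℓ) (Ioi 0) := by
  have hmeas : AEStronglyMeasurable (fun u => u ^ (d - 1) * K u ^ ℓ) (volume.restrict (Ioi 0)) :=
    ((measurable_id.pow_const _).aemeasurable.mul
      ((aemeasurable_restrict_of_antitoneOn measurableSet_Ioi
        (hK_anti.mono Ioi_subset_Ici_self)).pow_const ℓ)).aestronglyMeasurable
  have hKℓ : ∀ u, K u ^ ℓ ≤ C ^ (ℓ - 1) * K u := fun u =>
    rpow_le_rpow_sub_one_mul_self (hK_nonneg u) (hK_bdd u) hℓ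
  have hKℓ_nonneg : ∀ u, 0 ≤ K u ^ ℓ := fun u => Real.rpow_nonneg (hK_nonneg u) ℓ
  rw [← Ioc_union_Ioi_eq_Ioi zero_le_one]
  refine IntegrableOn.union ?_ ?_
  · refine Integrable.mono' (integrableOn_const (C := C ^ (ℓ - 1) * C) measure_Ioc_lt_top.ne)
      (hmeas.mono_set Ioc_subset_Ioi_self) ?_
    filter_upwards [ae_restrict_mem measurableSet_Ioc] with u ⟨hu0, hu1⟩
    have hC : 0 ≤ C := (hK_nonneg u).trans (hK_bdd u)
    rw [Real.norm_of_nonneg (mul_nonneg (by positivity) (hKℓ_nonneg u))]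
    calc u ^ (d - 1) * K u ^ ℓ ≤ 1 * (C ^ (ℓ - 1) * C) :=
          mul_le_mul (pow_le_one₀ hu0.le hu1)
            ((hKℓ u).trans (by gcongr; exact hK_bdd u)) (hKℓ_nonneg u) zero_le_one
      _ = C ^ (ℓ - 1) * C := one_mul _
  · refine Integrable.mono'
      ((hK_int.mono_set (Ioi_subset_Ioi zero_le_one)).const_mul (C ^ (ℓ - 1)))
      (hmeas.mono_set (Ioi_subset_Ioi zero_le_one)) ?_
    filter_upwards [ae_restrict_mem measurableSet_Ioi] with u (hu : 1 < u)
    rw [Real.norm_of_nonneg (mul_nonneg (by positivity) (hKℓ_nonneg u))]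
    calc u ^ (d - 1) * K u ^ ℓ ≤ u ^ d * (C ^ (ℓ - 1) * K u) :=
          mul_le_mul (pow_le_pow_right₀ hu.le (Nat.sub_le d 1)) (hKℓ u) (hKℓ_nonneg u)
            (by positivity)
      _ = C ^ (ℓ - 1) * (u ^ d * K u) := by ring

lemma norm_inv_smul_sub {E : Type*} [SeminormedAddCommGroup E] [NormedSpace ℝ E] (x x₀ : E)
    {h : ℝ} (hh : 0 < h) :
    ‖h⁻¹ • (x - x₀)‖ = dist x x₀ / h := by
  rw [norm_smul, norm_inv, Real.norm_of_nonneg hh.le, ← dist_eq_norm, inv_mul_eq_div]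

section AddHaar

variable {E : Type*} [NormedAddCommGroup E] [NormedSpace ℝ E] [FiniteDimensional ℝ E]
  [MeasurableSpace E] [BorelSpace E] (μ : Measure E) [μ.IsAddHaarMeasure]

lemma integrable_comp_norm_of_integrableOn {g : ℝ → ℝ}
    (hg : IntegrableOn (fun y => y ^ (finrank ℝ E - 1) * g y) (Ioi 0)) :
    Integrable (fun x : E => g ‖x‖) μ := by
  rcases subsingleton_or_nontrivial E with hE | hE
  · have : (fun x : E => g ‖x‖) = fun _ => g 0 := funext fun x => by
      rw [Subsingleton.elim x 0, norm_zero]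
    rw [this]
    exact integrable_const _
  · exact (integrable_fun_norm_addHaar μ).2 hg

lemma MeasureTheory.Integrable.comp_dist_div {g : ℝ → ℝ}
    (hg : Integrable (fun x : E => g ‖x‖) μ) (x₀ : E) {h : ℝ} (hh : 0 < h) :
    Integrable (fun x => g (dist x x₀ / h)) μ := by
  have := (hg.comp_smul (inv_ne_zero hh.ne')).comp_sub_right x₀
  simpa only [norm_inv_smul_sub _ x₀ hh] using this

lemma integral_comp_dist_div (g : ℝ → ℝ) (x₀ : E) {h : ℝ} (hh : 0 < h) :
    ∫ x, g (dist x x₀ / h) ∂μ = h ^ finrank ℝ E * ∫ x, g ‖x‖ ∂μ := by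
  simp only [← norm_inv_smul_sub _ x₀ hh]
  rw [integral_sub_right_eq_self (fun x => g ‖h⁻¹ • x‖) x₀,
    Measure.integral_comp_inv_smul_of_nonneg μ (fun x => g ‖x‖) hh.le, smul_eq_mul]

lemma integral_mul_comp_dist_div_le {f : E → ℝ} {g : ℝ → ℝ} {M : ℝ} (hf0 : ∀ x, 0 ≤ f x)
    (hfM : ∀ x, f x ≤ M) (hg0 : ∀ u, 0 ≤ g u) (hg : Integrable (fun x : E => g ‖x‖) μ) (x₀ : E)
    {h : ℝ} (hh : 0 < h) :
    ∫ x, f x * g (dist x x₀ / h) ∂μ ≤ (M * ∫ x, g ‖x‖ ∂μ) * h ^ finrank ℝ E :=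
  calc ∫ x, f x * g (dist x x₀ / h) ∂μ ≤ ∫ x, M * g (dist x x₀ / h) ∂μ :=
        integral_mono_of_nonneg (ae_of_all _ fun x => mul_nonneg (hf0 x) (hg0 _))
          ((hg.comp_dist_div μ x₀ hh).const_mul M)
          (ae_of_all _ fun x => mul_le_mul_of_nonneg_right (hfM x) (hg0 _))
    _ = (M * ∫ x, g ‖x‖ ∂μ) * h ^ finrank ℝ E := by
        rw [integral_const_mul, integral_comp_dist_div μ g x₀ hh]; ring

end AddHaar

lemma integrable_rpow_comp_norm {d : ℕ} {K : ℝ → ℝ} {C ℓ : ℝ}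
    (hK_nonneg : ∀ u, 0 ≤ K u) (hK_bdd : ∀ u, K u ≤ C) (hK_anti : AntitoneOn K (Ici 0))
    (hℓ : 1 ≤ ℓ) (hK_int : IntegrableOn (fun u => u ^ d * K u) (Ioi 0)) :
    Integrable fun x : EuclideanSpace ℝ (Fin d) => K ‖x‖ ^ ℓ :=
  integrable_comp_norm_of_integrableOn volume <| by
    rw [finrank_euclideanSpace_fin]
    exact integrableOn_pow_pred_mul_rpow hK_nonneg hK_bdd hK_anti hℓ hK_int

lemma integral_withDensity_ofReal {X : Type*} [MeasurableSpace X] {μ : Measure X} {f : X → ℝ}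
    (hf : Measurable f) (hf0 : ∀ x, 0 ≤ f x) (g : X → ℝ) :
    ∫ x, g x ∂μ.withDensity (fun x => ENNReal.ofReal (f x)) = ∫ x, f x * g x ∂μ := by
  rw [integral_withDensity_eq_integral_toReal_smul hf.ennreal_ofReal
    (ae_of_all _ fun _ => ENNReal.ofReal_lt_top)]
  simp only [ENNReal.toReal_ofReal (hf0 _), smul_eq_mul]

lemma EuclideanSpace.volume_setOf_forall_mem {ι : Type*} [Fintype ι] {s : ι → Set ℝ}
    (hs : ∀ i, MeasurableSet (s i)) :
    volume {y : EuclideanSpace ℝ ι | ∀ i, y i ∈ s i} = ∏ i, volume (s i) := by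
  have : {y : EuclideanSpace ℝ ι | ∀ i, y i ∈ s i} = WithLp.ofLp ⁻¹' univ.pi s := by ext; simp
  rw [this, (PiLp.volume_preserving_ofLp ι).measure_preimage
    (MeasurableSet.univ_pi hs).nullMeasurableSet, volume_pi_pi]

lemma EuclideanSpace.dist_le_sqrt_card_mul {ι : Type*} [Fintype ι] {x y : EuclideanSpace ℝ ι}
    {t : ℝ} (ht : 0 ≤ t) (hxy : ∀ i, dist (x i) (y i) ≤ t) :
    dist x y ≤ √(Fintype.card ι) * t := by
  calc dist x y = √(∑ i, dist (x i) (y i) ^ 2) := EuclideanSpace.dist_eq x y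
    _ ≤ √(∑ _i : ι, t ^ 2) := by gcongr with i; exact hxy i
    _ = √(Fintype.card ι) * t := by
      rw [Finset.sum_const, Finset.card_univ, nsmul_eq_mul, Real.sqrt_mul (by positivity),
        Real.sqrt_sq ht]

def unitCube (d : ℕ) : Set (EuclideanSpace ℝ (Fin d)) := {x | ∀ i, x i ∈ Icc (0 : ℝ) 1}

lemma measurableSet_unitCube (d : ℕ) : MeasurableSet (unitCube d) := by
  unfold unitCube; measurability

lemma pow_le_volume_unitCube_inter_closedBall {d : ℕ} {x₀ : EuclideanSpace ℝ (Fin d)}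
    (hx₀ : x₀ ∈ unitCube d) {t r : ℝ} (ht0 : 0 ≤ t) (ht1 : t ≤ 1) (htr : √d * t ≤ r) :
    t ^ d ≤ volume.real (unitCube d ∩ closedBall x₀ r) := by
  -- `∏ i, [a i, a i + t]` is a subcube of the unit cube containing `x₀`
  set a : Fin d → ℝ := fun i => min (x₀ i) (1 - t)
  set S : Set (EuclideanSpace ℝ (Fin d)) := {y | ∀ i, y i ∈ Icc (a i) (a i + t)}
  have hS_vol : volume.real S = t ^ d := by
    rw [Measure.real, EuclideanSpace.volume_setOf_forall_mem fun i => measurableSet_Icc]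
    simp [ht0]
  have hS_sub : S ⊆ unitCube d ∩ closedBall x₀ r := by
    intro y hy
    have ha : ∀ i, 0 ≤ a i ∧ a i + t ≤ 1 ∧ a i ≤ x₀ i ∧ x₀ i ≤ a i + t := fun i => by
      have := hx₀ i
      simp only [a, mem_Icc] at this ⊢
      refine ⟨le_min this.1 (by linarith), ?_, min_le_left _ _, ?_⟩ <;>
        rcases min_cases (x₀ i) (1 - t) with h | h <;> linarith
    refine ⟨fun i => ⟨(ha i).1.trans (hy i).1, (hy i).2.trans (ha i).2.1⟩, ?_⟩
    refine mem_closedBall.2 ((EuclideanSpace.dist_le_sqrt_card_mul ht0 fun i => ?_).trans ?_)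
    · rw [Real.dist_eq, abs_le]
      obtain ⟨hya, hyb⟩ := hy i
      obtain ⟨-, -, hxa, hxb⟩ := ha i
      constructor <;> linarith
    · simpa using htr
  rw [← hS_vol]
  exact measureReal_mono hS_sub
    ((measure_mono inter_subset_right).trans_lt measure_closedBall_lt_top).ne

lemma le_integral_mul_comp_dist_div {d : ℕ} {f : EuclideanSpace ℝ (Fin d) → ℝ} {g : ℝ → ℝ}
    {L : ℝ} (hL : 0 ≤ L) (hf0 : ∀ x, 0 ≤ f x) (hfL : ∀ x ∈ unitCube d, L ≤ f x)
    (hg0 : ∀ u, 0 ≤ g u) (hg : AntitoneOn g (Ici 0)) {x₀ : EuclideanSpace ℝ (Fin d)}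
    (hx₀ : x₀ ∈ unitCube d) {h : ℝ} (hh0 : 0 < h) (hh1 : h ≤ 1)
    (hint : Integrable fun x => f x * g (dist x x₀ / h)) :
    L * g 1 * ((√d + 1)⁻¹ * h) ^ d ≤ ∫ x, f x * g (dist x x₀ / h) := by
  set s := unitCube d ∩ closedBall x₀ h
  have hs : MeasurableSet s := (measurableSet_unitCube d).inter measurableSet_closedBall
  have hs_fin : volume s ≠ ⊤ :=
    ((measure_mono inter_subset_right).trans_lt measure_closedBall_lt_top).ne
  have hle : ∀ x ∈ s, L * g 1 ≤ f x * g (dist x x₀ / h) := by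
    rintro x ⟨hx_cube, hx_ball⟩
    have hx : dist x x₀ / h ≤ 1 := (div_le_one hh0).2 (mem_closedBall.1 hx_ball)
    have hg1 : g 1 ≤ g (dist x x₀ / h) :=
      hg (mem_Ici.2 (div_nonneg dist_nonneg hh0.le)) (mem_Ici.2 zero_le_one) hx
    exact mul_le_mul (hfL x hx_cube) hg1 (hg0 1) (hf0 x)
  have hvol : ((√d + 1)⁻¹ * h) ^ d ≤ volume.real s := by
    have hsqrt : 0 ≤ √(d : ℝ) := Real.sqrt_nonneg _
    refine pow_le_volume_unitCube_inter_closedBall hx₀ (by positivity) ?_ ?_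
    · calc (√d + 1)⁻¹ * h ≤ 1 * 1 := by
            gcongr
            exact inv_le_one_of_one_le₀ (by linarith)
        _ = 1 := one_mul 1
    · calc √d * ((√d + 1)⁻¹ * h) ≤ (√d + 1) * ((√d + 1)⁻¹ * h) := by gcongr; linarith
        _ = h := by field_simp
  calc L * g 1 * ((√d + 1)⁻¹ * h) ^ d ≤ L * g 1 * volume.real s := by
        gcongr; exact mul_nonneg hL (hg0 1)
    _ = volume.real s • (L * g 1) := by rw [smul_eq_mul, mul_comm]
    _ ≤ ∫ x in s, f x * g (dist x x₀ / h) :=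
        setIntegral_ge_of_const_le hs hs_fin hle hint.integrableOn
    _ ≤ ∫ x, f x * g (dist x x₀ / h) :=
        setIntegral_le_integral hint (ae_of_all _ fun x => mul_nonneg (hf0 x) (hg0 _))

theorem stmt_11_general (d : ℕ) (L₁ L₁' : ℝ) (hL₁ : 0 < L₁) (hL₁' : L₁ ≤ L₁')
    (fX : EuclideanSpace ℝ (Fin d) → ℝ) (hfX_meas : Measurable fX)
    (cube : Set (EuclideanSpace ℝ (Fin d)))
    (hcube : cube = {x | ∀ i, x i ∈ Set.Icc (0:ℝ) 1})
    (hsupp : ∀ x ∉ cube, fX x = 0)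
    (hlow : ∀ x ∈ cube, L₁ ≤ fX x) (hup : ∀ x ∈ cube, fX x ≤ L₁')
    (μ : Measure (EuclideanSpace ℝ (Fin d)))
    (hμ : μ = volume.withDensity fun x => ENNReal.ofReal (fX x))
    (K₀ : ℝ → ℝ) (C : ℝ)
    (hK₀_nonneg : ∀ u, 0 ≤ K₀ u) (hK₀_bdd : ∀ u, K₀ u ≤ C)
    (hK₀_anti : AntitoneOn K₀ (Set.Ici 0))
    (hK₀_int : IntegrableOn (fun u => u ^ d * K₀ u) (Set.Ioi (0:ℝ)))
    (hK₀_one : 0 < K₀ 1) :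
    ∀ ℓ : ℝ, 1 ≤ ℓ → ∃ L₂ L₂' : ℝ, 0 < L₂ ∧ L₂ ≤ L₂' ∧
      ∀ x₀ ∈ cube, ∀ h ∈ Set.Ioc (0:ℝ) 1,
        L₂ ≤ (∫ x, (K₀ (dist x x₀ / h)) ^ ℓ ∂μ) / h ^ d ∧
        (∫ x, (K₀ (dist x x₀ / h)) ^ ℓ ∂μ) / h ^ d ≤ L₂' := by
  change cube = unitCube d at hcube
  subst hcube hμ
  intro ℓ hℓ
  have hfX_nonneg : ∀ x, 0 ≤ fX x := fun x => by
    by_cases hx : x ∈ unitCube d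
    exacts [hL₁.le.trans (hlow x hx), (hsupp x hx).ge]
  have hfX_le : ∀ x, fX x ≤ L₁' := fun x => by
    by_cases hx : x ∈ unitCube d
    exacts [hup x hx, (hsupp x hx).le.trans (hL₁.le.trans hL₁')]
  set g : ℝ → ℝ := fun u => K₀ u ^ ℓ
  have hg_nonneg : ∀ u, 0 ≤ g u := fun u => Real.rpow_nonneg (hK₀_nonneg u) ℓ
  have hg_anti : AntitoneOn g (Ici 0) := fun u hu v hv huv =>
    Real.rpow_le_rpow (hK₀_nonneg v) (hK₀_anti hu hv huv) (by linarith)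
  have hg_int : Integrable fun x : EuclideanSpace ℝ (Fin d) => g ‖x‖ :=
    integrable_rpow_comp_norm hK₀_nonneg hK₀_bdd hK₀_anti hℓ hK₀_int
  set L₂ := L₁ * g 1 * (√d + 1)⁻¹ ^ d
  have hL₂ : 0 < L₂ := by
    have : 0 < g 1 := Real.rpow_pos_of_pos hK₀_one ℓ
    positivity
  set A := ∫ x : EuclideanSpace ℝ (Fin d), g ‖x‖
  refine ⟨L₂, max (L₁' * A) L₂, hL₂, le_max_right _ _, ?_⟩
  rintro x₀ hx₀ h ⟨hh0, hh1⟩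
  have hint : Integrable fun x => fX x * g (dist x x₀ / h) :=
    (hg_int.comp_dist_div volume x₀ hh0).bdd_mul hfX_meas.aestronglyMeasurable
      (ae_of_all _ fun x => by rw [Real.norm_of_nonneg (hfX_nonneg x)]; exact hfX_le x)
  rw [integral_withDensity_ofReal hfX_meas hfX_nonneg, le_div_iff₀ (by positivity),
    div_le_iff₀ (by positivity)]
  constructor
  · calc L₂ * h ^ d = L₁ * g 1 * ((√d + 1)⁻¹ * h) ^ d := by ring
      _ ≤ _ := le_integral_mul_comp_dist_div hL₁.le hfX_nonneg hlow hg_nonneg hg_anti hx₀ hh0 hh1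
        hint
  · calc _ ≤ L₁' * A * h ^ d := by
          simpa only [finrank_euclideanSpace_fin] using
            integral_mul_comp_dist_div_le volume hfX_nonneg hfX_le hg_nonneg hg_int x₀ hh0
      _ ≤ _ := by gcongr; exact le_max_left _ _

/-- Kernel moment bounds: if `X` has density in `[L₁, L₁']` on `[0,1]^d` and the
radial kernel profile `K₀` is bounded, nonincreasing, with `u K₀ u` nonincreasing for
`u > 1` and `∫ u^d K₀ u du < ∞`, then for every `ℓ ≥ 1` the rescaled moment
`h^{-d} E[(K₀(‖X - x₀‖/h))^ℓ]` is bounded above and below by positive constants,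
uniformly in `x₀ ∈ [0,1]^d` and `h ∈ (0,1]`. -/
theorem stmt_11 (d : ℕ) (L₁ L₁' : ℝ) (hL₁ : 0 < L₁) (hL₁' : L₁ ≤ L₁')
    (fX : EuclideanSpace ℝ (Fin d) → ℝ) (hfX_meas : Measurable fX)
    (cube : Set (EuclideanSpace ℝ (Fin d)))
    (hcube : cube = {x | ∀ i, x i ∈ Set.Icc (0:ℝ) 1})
    (hsupp : ∀ x ∉ cube, fX x = 0)
    (hlow : ∀ x ∈ cube, L₁ ≤ fX x) (hup : ∀ x ∈ cube, fX x ≤ L₁')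
    (μ : Measure (EuclideanSpace ℝ (Fin d)))
    (hμ : μ = volume.withDensity fun x => ENNReal.ofReal (fX x))
    (hprob : IsProbabilityMeasure μ)
    (K₀ : ℝ → ℝ) (C : ℝ)
    (hK₀_nonneg : ∀ u, 0 ≤ K₀ u) (hK₀_bdd : ∀ u, K₀ u ≤ C)
    (hK₀_anti : AntitoneOn K₀ (Set.Ici 0))
    (hK₀_tail : AntitoneOn (fun u => u * K₀ u) (Set.Ioi 1))
    (hK₀_int : IntegrableOn (fun u => u ^ d * K₀ u) (Set.Ioi (0:ℝ)))
    (hK₀_one : 0 < K₀ 1) :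
    ∀ ℓ : ℝ, 1 ≤ ℓ → ∃ L₂ L₂' : ℝ, 0 < L₂ ∧ L₂ ≤ L₂' ∧
      ∀ x₀ ∈ cube, ∀ h ∈ Set.Ioc (0:ℝ) 1,
        L₂ ≤ (∫ x, (K₀ (dist x x₀ / h)) ^ ℓ ∂μ) / h ^ d ∧
        (∫ x, (K₀ (dist x x₀ / h)) ^ ℓ ∂μ) / h ^ d ≤ L₂' :=
  stmt_11_general d L₁ L₁' hL₁ hL₁' fX hfX_meas cube hcube hsupp hlow hup μ hμ K₀ C hK₀_nonneg
    hK₀_bdd hK₀_anti hK₀_int hK₀_one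
end

section
/- Let F : 𝒯 → 𝒜 map indices to events and suppose the oracle test score S* is independent of the oracle threshold q*(Z) conditional on each event φ(t). Suppose the conditional CDF F_t* of S* given φ(t) is L_t-Lipschitz. Let (S, q) be the realized score and threshold, and suppose Pr(|S − S*| ∨ |q − q*(Z)| ≤ ε | φ(t)) ≥ 1 − δ(ε). Then |Pr(S ≤ q | φ(t)) − (1−α)| ≤ δ(ε) + 2L_t ε + L_t · E[|q*(Z) − Q(1−α; F_t*)| ∧ L_t^{-1} | φ(t)]. -/
/-!
On the approximation event `E` the realized event `{S ≤ q}` lies between `{S* ≤ q* - 2ε}` and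
`{S* ≤ q* + 2ε}`, up to the mass `≤ δ` of `Eᶜ`. By independence (Fubini on the joint law),
`P(S* ≤ q* + c | A) = E[F(q* + c) | A]`, where `F` is the conditional cdf of `S*`. Being
continuous, `F` hits `1 - α` exactly at the quantile `Q`, and being `L`-Lipschitz with values in
`[0, 1]` it satisfies `|F(x + c) - F(Q)| ≤ L|c| + min(L|x - Q|, 1)`; integrating in `x = q*`
bounds both ends of the sandwich.
-/

open MeasureTheory ProbabilityTheory Filter

theorem apply_sInf_setOf_le_eq {F : ℝ → ℝ} (hF : Continuous F) {p : ℝ}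
    (hbot : ∀ᶠ u in atBot, F u < p) (htop : ∃ u, p ≤ F u) :
    F (sInf {u | p ≤ F u}) = p := by
  obtain ⟨b, hb⟩ := eventually_atBot.mp hbot
  have hb_lower : b ∈ lowerBounds {u | p ≤ F u} := fun u hu =>
    le_of_not_gt fun hub => (hb u hub.le).not_ge hu
  set x := sInf {u | p ≤ F u}
  have hx : p ≤ F x := (isClosed_le continuous_const hF).csInf_mem htop ⟨b, hb_lower⟩
  obtain ⟨u, hu, hFu⟩ :=
    intermediate_value_Icc (le_csInf htop hb_lower) hF.continuousOn ⟨(hb b le_rfl).le, hx⟩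
  rwa [le_antisymm hu.2 (csInf_le ⟨b, hb_lower⟩ hFu.ge)] at hFu

theorem cdf_sInf_setOf_le_cdf_eq {ν : Measure ℝ} [IsProbabilityMeasure ν]
    (hcont : Continuous (cdf ν)) {p : ℝ} (hp : p ∈ Set.Ioo 0 1) :
    cdf ν (sInf {u | p ≤ cdf ν u}) = p :=
  apply_sInf_setOf_le_eq hcont ((tendsto_cdf_atBot ν).eventually (eventually_lt_nhds hp.1))
    (((tendsto_cdf_atTop ν).eventually (eventually_gt_nhds hp.2)).exists.imp fun _ => le_of_lt)

theorem abs_sub_le_mul_min_inv {f : ℝ → ℝ} {L : ℝ} (hL : 0 < L)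
    (hlip : ∀ u v, |f u - f v| ≤ L * |u - v|) (hbdd : ∀ u v, |f u - f v| ≤ 1) (u v : ℝ) :
    |f u - f v| ≤ L * min |u - v| L⁻¹ := by
  rw [mul_min_of_nonneg _ _ hL.le, mul_inv_cancel₀ hL.ne']
  exact le_min (hlip u v) (hbdd u v)

section

variable {Ω : Type*} [MeasurableSpace Ω] {μ : Measure Ω} [IsProbabilityMeasure μ]

theorem measureReal_le_eq_integral_cdf_map {X Y : Ω → ℝ} (hX : Measurable X)
    (hY : Measurable Y) (hXY : IndepFun X Y μ) :
    μ.real {ω | X ω ≤ Y ω} = ∫ ω, cdf (μ.map X) (Y ω) ∂μ := by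
  have hle : MeasurableSet {p : ℝ × ℝ | p.1 ≤ p.2} :=
    measurableSet_le measurable_fst measurable_snd
  have hfubini : μ {ω | X ω ≤ Y ω} = ∫⁻ ω, μ.map X (Set.Iic (Y ω)) ∂μ := by
    rw [← Set.preimage_ofPred_eq (p := fun p : ℝ × ℝ => p.1 ≤ p.2)
        (f := fun ω => (X ω, Y ω)), ← Measure.map_apply (hX.prodMk hY) hle,
      (indepFun_iff_map_prod_eq_prod_map_map hX.aemeasurable hY.aemeasurable).mp hXY,
      Measure.prod_apply_symm hle, lintegral_map _ hY]
    · rfl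
    · exact measurable_measure_prodMk_right hle
  have : IsProbabilityMeasure (μ.map X) := Measure.isProbabilityMeasure_map hX.aemeasurable
  have hmono : Monotone fun y => μ.map X (Set.Iic y) := fun _ _ h =>
    measure_mono (Set.Iic_subset_Iic.mpr h)
  rw [measureReal_def, hfubini, ← integral_toReal (f := fun ω => μ.map X (Set.Iic (Y ω)))
    (hmono.measurable.comp hY).aemeasurable (ae_of_all _ fun _ => measure_lt_top _ _)]
  simp only [cdf_eq_real, measureReal_def]

theorem abs_integral_cdf_add_sub_le {ν : Measure ℝ} [IsProbabilityMeasure ν] {L : ℝ}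
    (hL : 0 < L) (hlip : ∀ u v, |cdf ν u - cdf ν v| ≤ L * |u - v|) {Y : Ω → ℝ}
    (hY : Measurable Y) (c x₀ : ℝ) :
    |∫ ω, cdf ν (Y ω + c) ∂μ - cdf ν x₀| ≤
      L * |c| + L * ∫ ω, min |Y ω - x₀| L⁻¹ ∂μ := by
  have hcdf_int : Integrable (fun ω => cdf ν (Y ω + c)) μ :=
    .of_bound ((monotone_cdf ν).measurable.comp (hY.add_const c)).aestronglyMeasurable 1
      (ae_of_all _ fun ω => by
        rw [Real.norm_of_nonneg (cdf_nonneg ν _)]; exact cdf_le_one ν _)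
  have hmin_int : Integrable (fun ω => min |Y ω - x₀| L⁻¹) μ :=
    .of_bound ((hY.sub_const x₀).abs.min measurable_const).aestronglyMeasurable L⁻¹
      (ae_of_all _ fun ω => by
        rw [Real.norm_of_nonneg (le_min (abs_nonneg _) (inv_nonneg.mpr hL.le))]
        exact min_le_right _ _)
  have hpoint (y : ℝ) : |cdf ν (y + c) - cdf ν x₀| ≤ L * |c| + L * min |y - x₀| L⁻¹ :=
    calc |cdf ν (y + c) - cdf ν x₀|
        ≤ |cdf ν (y + c) - cdf ν y| + |cdf ν y - cdf ν x₀| := abs_sub_le _ _ _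
      _ ≤ L * |c| + L * min |y - x₀| L⁻¹ := by
          gcongr
          · simpa using hlip (y + c) y
          · exact abs_sub_le_mul_min_inv hL hlip (fun u v => abs_sub_le_of_nonneg_of_le
              (cdf_nonneg ν u) (cdf_le_one ν u) (cdf_nonneg ν v) (cdf_le_one ν v)) y x₀
  calc |∫ ω, cdf ν (Y ω + c) ∂μ - cdf ν x₀|
      = |∫ ω, (cdf ν (Y ω + c) - cdf ν x₀) ∂μ| := by
        rw [integral_sub hcdf_int (integrable_const _), integral_const, probReal_univ, one_smul]
    _ ≤ ∫ ω, |cdf ν (Y ω + c) - cdf ν x₀| ∂μ := abs_integral_le_integral_abs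
    _ ≤ ∫ ω, (L * |c| + L * min |Y ω - x₀| L⁻¹) ∂μ :=
        integral_mono (hcdf_int.sub (integrable_const _)).abs
          ((integrable_const _).add (hmin_int.const_mul L)) fun ω => hpoint (Y ω)
    _ = L * |c| + L * ∫ ω, min |Y ω - x₀| L⁻¹ ∂μ := by
        rw [integral_add (integrable_const _) (hmin_int.const_mul L), integral_const,
          probReal_univ, one_smul, integral_const_mul]

theorem measureReal_le_add_one_sub_of_inter_subset {s t E : Set Ω} (hE : MeasurableSet E)
    (h : s ∩ E ⊆ t) : μ.real s ≤ μ.real t + (1 - μ.real E) :=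
  calc μ.real s ≤ μ.real (Eᶜ ∪ t) := measureReal_mono ((Set.inter_subset _ _ _).mp h)
    _ ≤ μ.real Eᶜ + μ.real t := measureReal_union_le _ _
    _ = μ.real t + (1 - μ.real E) := by rw [probReal_compl_eq_one_sub hE, add_comm]

theorem abs_measureReal_le_sub_le_of_close {S S' q q' : Ω → ℝ} (hS : Measurable S)
    (hS' : Measurable S') (hq : Measurable q) (hq' : Measurable q') {ε p L B : ℝ}
    (hε : 0 ≤ ε)
    (hshift : ∀ c, |μ.real {ω | S' ω ≤ q' ω + c} - p| ≤ L * |c| + B) :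
    |μ.real {ω | S ω ≤ q ω} - p| ≤
      (1 - μ.real {ω | |S ω - S' ω| ⊔ |q ω - q' ω| ≤ ε}) + 2 * L * ε + B := by
  set E := {ω | |S ω - S' ω| ⊔ |q ω - q' ω| ≤ ε}
  have hE : MeasurableSet E :=
    measurableSet_le ((hS.sub hS').abs.max (hq.sub hq').abs) measurable_const
  have hclose {ω} (hω : ω ∈ E) : |S ω - S' ω| ≤ ε ∧ |q ω - q' ω| ≤ ε :=
    max_le_iff.mp hω
  have hupper :
      μ.real {ω | S ω ≤ q ω} ≤ μ.real {ω | S' ω ≤ q' ω + 2 * ε} + (1 - μ.real E) :=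
    measureReal_le_add_one_sub_of_inter_subset hE fun ω ⟨(hSq : S ω ≤ q ω), hω⟩ => by
      obtain ⟨hSS', hqq'⟩ := hclose hω
      show S' ω ≤ q' ω + 2 * ε
      linarith [(abs_le.mp hSS').1, (abs_le.mp hqq').2]
  have hlower :
      μ.real {ω | S' ω ≤ q' ω + -(2 * ε)} ≤
        μ.real {ω | S ω ≤ q ω} + (1 - μ.real E) :=
    measureReal_le_add_one_sub_of_inter_subset hE
      fun ω ⟨(hSq : S' ω ≤ q' ω + -(2 * ε)), hω⟩ => by
        obtain ⟨hSS', hqq'⟩ := hclose hω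
        show S ω ≤ q ω
        linarith [(abs_le.mp hSS').2, (abs_le.mp hqq').1]
  have h2ε : |2 * ε| = 2 * ε := abs_of_nonneg (by positivity)
  have hplus := abs_le.mp (hshift (2 * ε))
  have hminus := abs_le.mp (hshift (-(2 * ε)))
  rw [h2ε] at hplus
  rw [abs_neg, h2ε] at hminus
  exact abs_le.mpr ⟨by linarith, by linarith⟩

end

theorem stmt_14_general {Ω : Type*} [MeasurableSpace Ω] (P : Measure Ω) [IsProbabilityMeasure P]
    (A : Set Ω) (hA_pos : P A ≠ 0)
    (Sstar qstar S q : Ω → ℝ)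
    (hSstar_meas : Measurable Sstar) (hqstar_meas : Measurable qstar)
    (hS_meas : Measurable S) (hq_meas : Measurable q)
    (hindep : IndepFun Sstar qstar (P[|A]))
    (α : ℝ) (hα : α ∈ Set.Ioo (0:ℝ) 1)
    (Lt : ℝ) (hLt : 0 < Lt)
    (Ft : ℝ → ℝ) (hFt : ∀ u, Ft u = ((P[|A]) {ω | Sstar ω ≤ u}).toReal)
    (hFt_lip : ∀ u v, |Ft u - Ft v| ≤ Lt * |u - v|)
    (ε δ : ℝ) (hε : 0 ≤ ε)
    (happrox : 1 - δ ≤ ((P[|A]) {ω | |S ω - Sstar ω| ⊔ |q ω - qstar ω| ≤ ε}).toReal) :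
    |((P[|A]) {ω | S ω ≤ q ω}).toReal - (1 - α)| ≤
      δ + 2 * Lt * ε +
        Lt * ∫ ω, min |qstar ω - sInf {u | 1 - α ≤ Ft u}| Lt⁻¹ ∂(P[|A]) := by
  set μ := P[|A]
  have : IsProbabilityMeasure μ := cond_isProbabilityMeasure (μ := P) hA_pos
  have : IsProbabilityMeasure (μ.map Sstar) :=
    Measure.isProbabilityMeasure_map hSstar_meas.aemeasurable
  obtain rfl : Ft = cdf (μ.map Sstar) := funext fun u => by
    rw [hFt, cdf_eq_real, map_measureReal_apply hSstar_meas measurableSet_Iic]; rfl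
  have hcont : Continuous (cdf (μ.map Sstar)) :=
    LipschitzWith.continuous (K := Lt.toNNReal) <| .of_dist_le_mul fun u v => by
      simpa [Real.dist_eq, hLt.le] using hFt_lip u v
  have hα' : 1 - α ∈ Set.Ioo 0 1 := ⟨sub_pos.2 hα.2, sub_lt_self 1 hα.1⟩
  set I := ∫ ω, min |qstar ω - sInf {u | 1 - α ≤ cdf (μ.map Sstar) u}| Lt⁻¹ ∂μ
  have hshift (c : ℝ) :
      |μ.real {ω | Sstar ω ≤ qstar ω + c} - (1 - α)| ≤ Lt * |c| + Lt * I := by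
    rw [measureReal_le_eq_integral_cdf_map hSstar_meas (hqstar_meas.add_const c)
        (hindep.comp measurable_id (measurable_add_const c)),
      ← cdf_sInf_setOf_le_cdf_eq hcont hα']
    exact abs_integral_cdf_add_sub_le (μ := μ) hLt hFt_lip hqstar_meas c _
  have hbound :=
    abs_measureReal_le_sub_le_of_close hS_meas hSstar_meas hq_meas hqstar_meas hε hshift
  rw [← measureReal_def] at happrox ⊢
  linarith

/-- Abstract conditional-miscoverage decomposition: conditional on the event `A = φ(t)`,
if the oracle score `Sstar` is independent of the oracle threshold `qstar`, the oracle
conditional CDF `Ft` is `Lt`-Lipschitz, and the realized score/threshold pair `(S, q)`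
approximates `(Sstar, qstar)` within `ε` with conditional probability at least `1 - δ`,
then the conditional coverage of `{S ≤ q}` deviates from `1 - α` by at most
`δ + 2 Lt ε + Lt E[|qstar - Q(1-α; Ft)| ∧ Lt⁻¹ | A]`. -/
theorem stmt_14 {Ω : Type*} [MeasurableSpace Ω] (P : Measure Ω) [IsProbabilityMeasure P]
    (A : Set Ω) (hA_meas : MeasurableSet A) (hA_pos : P A ≠ 0)
    (Sstar qstar S q : Ω → ℝ)
    (hSstar_meas : Measurable Sstar) (hqstar_meas : Measurable qstar)
    (hS_meas : Measurable S) (hq_meas : Measurable q)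
    (hindep : IndepFun Sstar qstar (P[|A]))
    (α : ℝ) (hα : α ∈ Set.Ioo (0:ℝ) 1)
    (Lt : ℝ) (hLt : 0 < Lt)
    (Ft : ℝ → ℝ) (hFt : ∀ u, Ft u = ((P[|A]) {ω | Sstar ω ≤ u}).toReal)
    (hFt_lip : ∀ u v, |Ft u - Ft v| ≤ Lt * |u - v|)
    (ε δ : ℝ) (hε : 0 ≤ ε) (hδ : 0 ≤ δ)
    (happrox : 1 - δ ≤ ((P[|A]) {ω | |S ω - Sstar ω| ⊔ |q ω - qstar ω| ≤ ε}).toReal) :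
    |((P[|A]) {ω | S ω ≤ q ω}).toReal - (1 - α)| ≤
      δ + 2 * Lt * ε +
        Lt * ∫ ω, min |qstar ω - sInf {u | 1 - α ≤ Ft u}| Lt⁻¹ ∂(P[|A]) :=
  stmt_14_general P A hA_pos Sstar qstar S q hSstar_meas hqstar_meas hS_meas hq_meas hindep α hα Lt
    hLt Ft hFt hFt_lip ε δ hε happrox
end

section
/- Let w(x) = K(x, X̃; h)/K_X(X̃) where K_X(x) = E[K(x, X; h)] for X ~ P_X, and where, conditional on X_{n+1} ~ P_X, the auxiliary variable X̃ is drawn with density proportional to K(·, X_{n+1}; h). Assume K(x₁,x₂;h) = K(x₂,x₁;h) is symmetric and K₀ := ∫ K(x̃, x; h) dx̃ is a finite constant independent of x. Then for every fixed x in the support, E[w(x)] = 1, where the expectation is over (X_{n+1}, X̃). -/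
/-! Integrate out `X_{n+1}` first (Fubini): for fixed `X̃ = x̃`, the integral of
`K(x̃, ·) f_X` is exactly the normaliser `K_X(x̃)`, so the weight's denominator cancels and
what remains is `∫ K(x, x̃) dx̃ / K₀`, which is `1` by symmetry and constant mass of `K`. -/

open MeasureTheory

section

variable {α : Type*} [MeasurableSpace α] (μ : Measure α)

theorem integral_div_mul_div_mul_of_eq_integral (g f : α → ℝ) (a b c : ℝ)
    (hb : b = ∫ y, g y * f y ∂μ) (hb0 : b ≠ 0) :
    ∫ y, (a / b) * (g y / c) * f y ∂μ = a / c := by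
  have hfun : (fun y => (a / b) * (g y / c) * f y) = fun y => (a / (b * c)) * (g y * f y) := by
    funext y
    ring
  rw [hfun, integral_const_mul, ← hb]
  by_cases hc : c = 0
  · simp [hc]
  · field_simp

theorem integral_div_mass_eq_one_of_symm (K : α → α → ℝ) (hK_symm : ∀ x y, K x y = K y x)
    (c : ℝ) (hc0 : c ≠ 0) (hc : ∀ x, ∫ xt, K xt x ∂μ = c) (x : α) :
    ∫ xt, K x xt / c ∂μ = 1 := by
  simp_rw [hK_symm x]
  rw [integral_div, hc x, div_self hc0]

end

theorem stmt_16_general {𝒳 : Type*} [MeasurableSpace 𝒳] (lam : Measure 𝒳) [SigmaFinite lam]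
    (fX : 𝒳 → ℝ)
    (K : 𝒳 → 𝒳 → ℝ) (hK_symm : ∀ x y, K x y = K y x)
    (c : ℝ) (hc_pos : 0 < c) (hc : ∀ x, ∫ xt, K xt x ∂lam = c)
    (KX : 𝒳 → ℝ) (hKX : ∀ x, KX x = ∫ y, K x y * fX y ∂lam)
    (hKX_pos : ∀ x, 0 < KX x)
    (x : 𝒳)
    (hint : Integrable (fun p : 𝒳 × 𝒳 =>
      (K x p.2 / KX p.2) * (K p.2 p.1 / c) * fX p.1) (lam.prod lam)) :
    ∫ x₁, ∫ xt, (K x xt / KX xt) * (K xt x₁ / c) * fX x₁ ∂lam ∂lam = 1 := by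
  rw [integral_integral_swap hint]
  have h_inner : ∀ xt, ∫ x₁, (K x xt / KX xt) * (K xt x₁ / c) * fX x₁ ∂lam = K x xt / c :=
    fun xt => integral_div_mul_div_mul_of_eq_integral lam (K xt) fX _ _ _ (hKX xt)
      (hKX_pos xt).ne'
  simp_rw [h_inner]
  exact integral_div_mass_eq_one_of_symm lam K hK_symm c hc_pos.ne' hc x

/-- RLCP marginal-validity identity: with `X̃` drawn (given `X_{n+1} ~ f_X`) with
density `K(·, X_{n+1})/c`, the normalized randomized-localization weight
`w(x) = K(x, X̃)/K_X(X̃)` satisfies `E[w(x)] = 1` for every fixed `x` in the support. -/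
theorem stmt_16 {𝒳 : Type*} [MeasurableSpace 𝒳] (lam : Measure 𝒳) [SigmaFinite lam]
    (fX : 𝒳 → ℝ) (hfX_meas : Measurable fX) (hfX_nonneg : ∀ x, 0 ≤ fX x)
    (hfX_prob : ∫ x, fX x ∂lam = 1)
    (K : 𝒳 → 𝒳 → ℝ) (hK_meas : Measurable (Function.uncurry K))
    (hK_nonneg : ∀ x y, 0 ≤ K x y) (hK_symm : ∀ x y, K x y = K y x)
    (c : ℝ) (hc_pos : 0 < c) (hc : ∀ x, ∫ xt, K xt x ∂lam = c)
    (KX : 𝒳 → ℝ) (hKX : ∀ x, KX x = ∫ y, K x y * fX y ∂lam)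
    (hKX_pos : ∀ x, 0 < KX x)
    (x : 𝒳) (hx : 0 < fX x)
    (hint : Integrable (fun p : 𝒳 × 𝒳 =>
      (K x p.2 / KX p.2) * (K p.2 p.1 / c) * fX p.1) (lam.prod lam)) :
    ∫ x₁, ∫ xt, (K x xt / KX xt) * (K xt x₁ / c) * fX x₁ ∂lam ∂lam = 1 :=
  stmt_16_general lam fX K hK_symm c hc_pos hc KX hKX hKX_pos x hint
end

section
/- Let f_{X,1}, f_{X,2} be densities on 𝒳 with ratio r_X = f_{X,2}/f_{X,1}, and let k : 𝒳 × 𝒳 → ℝ₊ satisfy k_𝒳(x₂) = ∫ k(x₁,x₂) dx₁ < ∞ for all x₂. Given X_{n+1} ~ f_{X,2}, draw X̃ with density k(·, X_{n+1})/k_𝒳(X_{n+1}). Define b(x̃) = ∫ f_{X,2}(u) k(x̃,u)/k_𝒳(u) du and the weight w(x) = r_X(x) k(X̃, x)/k_𝒳(x). Then for every fixed x, E[w(x)/b(X̃)] = r_X(x). -/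
open MeasureTheory

/- Interchanging the order of integration, the inner integral over `x₁` of the density
`k(X̃, ·)/kC · f₂` is exactly `b(X̃)`, which cancels the normalization; the remaining integral
over `X̃` of `k(X̃, x)` is `kC x`, which cancels the other one. -/

theorem integral_mul_div_of_integral_eq {α : Type*} [MeasurableSpace α] (μ : Measure α)
    {g : α → ℝ} {B : ℝ} (hg : ∫ a, g a ∂μ = B) (hB : B ≠ 0) (c : ℝ) :
    ∫ a, c * g a / B ∂μ = c := by
  rw [integral_div, integral_const_mul, hg]
  field_simp

theorem stmt_17_general {𝒳 : Type*} [MeasurableSpace 𝒳] (lam : Measure 𝒳) [SigmaFinite lam]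
    (f₂ r : 𝒳 → ℝ)
    (k : 𝒳 → 𝒳 → ℝ)
    (kC : 𝒳 → ℝ) (hkC : ∀ x₂, kC x₂ = ∫ x₁, k x₁ x₂ ∂lam) (hkC_pos : ∀ x₂, 0 < kC x₂)
    (b : 𝒳 → ℝ) (hb : ∀ xt, b xt = ∫ u, f₂ u * k xt u / kC u ∂lam) (hb_pos : ∀ xt, 0 < b xt)
    (x : 𝒳)
    (hint : Integrable (fun p : 𝒳 × 𝒳 =>
      (r x * k p.2 x / kC x / b p.2) * (k p.2 p.1 / kC p.1) * f₂ p.1) (lam.prod lam)) :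
    ∫ x₁, ∫ xt, (r x * k xt x / kC x / b xt) * (k xt x₁ / kC x₁) * f₂ x₁ ∂lam ∂lam
      = r x := by
  have inner (xt : 𝒳) :
      ∫ x₁, (r x * k xt x / kC x / b xt) * (k xt x₁ / kC x₁) * f₂ x₁ ∂lam
        = r x * k xt x / kC x := by
    refine (integral_congr_ae (.of_forall fun x₁ => ?_)).trans
      (integral_mul_div_of_integral_eq lam (hb xt).symm (hb_pos xt).ne'
        (r x * k xt x / kC x))
    ring
  rw [integral_integral_swap hint]
  simp_rw [inner]
  exact integral_mul_div_of_integral_eq lam (hkC x).symm (hkC_pos x).ne' (r x)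

/-- GRLCP marginal-validity identity under covariate shift: with calibration density
`f₁`, test density `f₂ = r · f₁`, localization function `k` with column integrals
`kC x₂ = ∫ k(x₁, x₂) dλ(x₁)`, auxiliary draw `X̃ | X_{n+1}` with density
`k(·, X_{n+1})/kC(X_{n+1})`, normalizer `b(x̃) = ∫ f₂(u) k(x̃,u)/kC(u) du`, and weight
`w(x) = r(x) k(X̃, x)/kC(x)`, one has `E[w(x)/b(X̃)] = r(x)` for every fixed `x`. -/
theorem stmt_17 {𝒳 : Type*} [MeasurableSpace 𝒳] (lam : Measure 𝒳) [SigmaFinite lam]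
    (f₁ f₂ r : 𝒳 → ℝ)
    (hf₁_meas : Measurable f₁) (hf₂_meas : Measurable f₂)
    (hf₁_nonneg : ∀ x, 0 ≤ f₁ x) (hf₂_nonneg : ∀ x, 0 ≤ f₂ x)
    (hf₁_prob : ∫ x, f₁ x ∂lam = 1) (hf₂_prob : ∫ x, f₂ x ∂lam = 1)
    (hr : ∀ x, f₂ x = r x * f₁ x)
    (k : 𝒳 → 𝒳 → ℝ) (hk_meas : Measurable (Function.uncurry k))
    (hk_nonneg : ∀ x y, 0 ≤ k x y)
    (kC : 𝒳 → ℝ) (hkC : ∀ x₂, kC x₂ = ∫ x₁, k x₁ x₂ ∂lam) (hkC_pos : ∀ x₂, 0 < kC x₂)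
    (b : 𝒳 → ℝ) (hb : ∀ xt, b xt = ∫ u, f₂ u * k xt u / kC u ∂lam) (hb_pos : ∀ xt, 0 < b xt)
    (x : 𝒳)
    (hint : Integrable (fun p : 𝒳 × 𝒳 =>
      (r x * k p.2 x / kC x / b p.2) * (k p.2 p.1 / kC p.1) * f₂ p.1) (lam.prod lam)) :
    ∫ x₁, ∫ xt, (r x * k xt x / kC x / b xt) * (k xt x₁ / kC x₁) * f₂ x₁ ∂lam ∂lam
      = r x :=
  stmt_17_general lam f₂ r k kC hkC hkC_pos b hb hb_pos x hint
end
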